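/- For the 3-processor fourth-order method with a_1, a_2, a_3 free: the system b_1 + b_2 + b_3 = 1, ∑ b_i w31(a_i) = 0, ∑ b_i w41(a_i) = 0, ∑ b_i w51(a_i) = 0 (i.e., G_51 = 0) is solvable over the reals, where w31(a) = (1-a)³+a³, w41(a) = (1/2)a(2a-1)(1-a), w51(a) = (1-a)⁵+a⁵; in particular a_1 = -0.19220568886474299..., with suitable b_i, gives an approximate solution, whereas with k = 2 (only b_1, b_2, a_1, a_2) the same system has no real solution. -/

import Mathlib

noncomputable section
open Finset

/-- `w31(a) = (1-a)³ + a³`. -/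
def w31 (a : ℝ) : ℝ := (1 - a)^3 + a^3

/-- `w41(a) = (1/2)a(2a-1)(1-a)`. -/
def w41 (a : ℝ) : ℝ := (1/2) * a * (2*a - 1) * (1 - a)

/-- `w51(a) = (1-a)⁵ + a⁵`. -/
def w51 (a : ℝ) : ℝ := (1 - a)^5 + a^5

/-!
In the variable `x = a (1 - a)` one has `w31 = 1 - 3x` and `w51 = 1 - 5x + 5x²`, so the
conditions on `w31` and `w51` say that the weights `bᵢ` at the nodes `xᵢ` have moments
`1, 1/3, 2/15`. For two nodes this forces `(x₁ - 1/3)(x₂ - 1/3) = 1/9 - 2/15 < 0`, which is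
impossible since `a (1 - a) ≤ 1/4` for every real `a`. Three nodes are enough: the nodes
`a = 2, 3/5, 0` with suitable weights solve the system exactly.
-/

lemma w31_eq (a : ℝ) : w31 a = 1 - 3 * (a * (1 - a)) := by
  unfold w31; ring

lemma w51_eq (a : ℝ) : w51 a = 1 - 5 * (a * (1 - a)) + 5 * (a * (1 - a)) ^ 2 := by
  unfold w51; ring

lemma mul_one_sub_le_quarter (a : ℝ) : a * (1 - a) ≤ 1 / 4 := by
  nlinarith [sq_nonneg (a - 1 / 2)]

section TwoPoint

variable {b₁ b₂ x₁ x₂ m s : ℝ}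

lemma two_point_moments_mul_sub (h₀ : b₁ + b₂ = 1) (h₁ : b₁ * x₁ + b₂ * x₂ = m)
    (h₂ : b₁ * x₁ ^ 2 + b₂ * x₂ ^ 2 = s) : (x₁ - m) * (x₂ - m) = m ^ 2 - s := by
  linear_combination (x₁ + x₂) * h₁ - (x₁ * x₂) * h₀ - h₂

lemma two_point_second_moment_lt_sq (hx₁ : x₁ < m) (hx₂ : x₂ < m) (h₀ : b₁ + b₂ = 1)
    (h₁ : b₁ * x₁ + b₂ * x₂ = m) (h₂ : b₁ * x₁ ^ 2 + b₂ * x₂ ^ 2 = s) : s < m ^ 2 := by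
  have hpos : 0 < (x₁ - m) * (x₂ - m) := mul_pos_of_neg_of_neg (by linarith) (by linarith)
  linarith [two_point_moments_mul_sub h₀ h₁ h₂]

end TwoPoint

lemma exists_three_processor_order4_G51 :
    ∃ b a : Fin 3 → ℝ,
      (∑ i, b i = 1) ∧ (∑ i, b i * w31 (a i) = 0) ∧
      (∑ i, b i * w41 (a i) = 0) ∧ (∑ i, b i * w51 (a i) = 0) := by
  refine ⟨![1/84, 125/84, -1/2], ![2, 3/5, 0], ?_, ?_, ?_, ?_⟩ <;>
    simp [Fin.sum_univ_three, w31, w41, w51] <;> norm_num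

lemma not_exists_two_processor_G31_G51 :
    ¬ ∃ b₁ b₂ a₁ a₂ : ℝ,
      b₁ + b₂ = 1 ∧ b₁ * w31 a₁ + b₂ * w31 a₂ = 0 ∧ b₁ * w51 a₁ + b₂ * w51 a₂ = 0 := by
  rintro ⟨b₁, b₂, a₁, a₂, h₀, h31, h51⟩
  rw [w31_eq, w31_eq] at h31
  rw [w51_eq, w51_eq] at h51
  have h₁ : b₁ * (a₁ * (1 - a₁)) + b₂ * (a₂ * (1 - a₂)) = 1 / 3 := by
    linear_combination (1 / 3) * h₀ - (1 / 3) * h31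
  have h₂ : b₁ * (a₁ * (1 - a₁)) ^ 2 + b₂ * (a₂ * (1 - a₂)) ^ 2 = 2 / 15 := by
    linear_combination (1 / 5) * h51 - (1 / 5) * h₀ + h₁
  have hlt := two_point_second_moment_lt_sq
    ((mul_one_sub_le_quarter a₁).trans_lt (by norm_num))
    ((mul_one_sub_le_quarter a₂).trans_lt (by norm_num)) h₀ h₁ h₂
  norm_num at hlt

/-- The fourth-order conditions together with `G₅₁ = 0` are solvable with `k = 3`
processors, but have no real solution with `k = 2`. -/
theorem three_processor_order4_G51 :
    (∃ b a : Fin 3 → ℝ,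
      (∑ i, b i = 1) ∧ (∑ i, b i * w31 (a i) = 0) ∧
      (∑ i, b i * w41 (a i) = 0) ∧ (∑ i, b i * w51 (a i) = 0)) ∧
    ¬ (∃ b₁ b₂ a₁ a₂ : ℝ,
      b₁ + b₂ = 1 ∧ b₁ * w31 a₁ + b₂ * w31 a₂ = 0 ∧
      b₁ * w41 a₁ + b₂ * w41 a₂ = 0 ∧ b₁ * w51 a₁ + b₂ * w51 a₂ = 0) := by
  refine ⟨exists_three_processor_order4_G51, ?_⟩
  rintro ⟨b₁, b₂, a₁, a₂, h₀, h31, -, h51⟩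
  exact not_exists_two_processor_G31_G51 ⟨b₁, b₂, a₁, a₂, h₀, h31, h51⟩

end
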